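/- Let n ≥ 3. The number of sets I of diagonals of the convex (n+3)-gon G_{n+3} with |I| = q(n)+1 such that the non-crossing graph G(I) is disconnected equals n+3 if n is even, and (n+3)/2 if n is odd; moreover each such G(I) has exactly two connected components. -/

import Mathlib

/-- A diagonal of the convex `N`-gon with vertices labelled `1, …, N` in cyclic order:
a pair `(i, j)` with `1 ≤ i`, `i + 2 ≤ j ≤ N`, excluding the edge `(1, N)`. -/
def IsDiag (N : ℕ) (d : ℕ × ℕ) : Prop :=
  1 ≤ d.1 ∧ d.1 + 2 ≤ d.2 ∧ d.2 ≤ N ∧ ¬(d.1 = 1 ∧ d.2 = N)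

instance (N : ℕ) (d : ℕ × ℕ) : Decidable (IsDiag N d) := by
  unfold IsDiag; infer_instance

/-- Two diagonals of a convex polygon cross (intersect at an interior point). -/
def Crosses (d e : ℕ × ℕ) : Prop :=
  (d.1 < e.1 ∧ e.1 < d.2 ∧ d.2 < e.2) ∨ (e.1 < d.1 ∧ d.1 < e.2 ∧ e.2 < d.2)

instance (d e : ℕ × ℕ) : Decidable (Crosses d e) := by
  unfold Crosses; infer_instance

/-- The finite set of all diagonals of the convex `N`-gon. -/
def Diags (N : ℕ) : Finset (ℕ × ℕ) :=
  (Finset.range (N + 1) ×ˢ Finset.range (N + 1)).filter (IsDiag N)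
/-- The non-crossing graph `G(I)` on a finite set `I` of diagonals: two distinct
diagonals are adjacent iff they do not cross. Its connected components correspond to
the connected components of the union `P_I` of the facets of the associahedron `Asⁿ`
indexed by `I`. -/
def ncGraph (I : Finset (ℕ × ℕ)) : SimpleGraph {x // x ∈ I} where
  Adj d e := d ≠ e ∧ ¬ Crosses d.1 e.1
  symm := ⟨by
    rintro d e ⟨h1, h2⟩
    exact ⟨h1.symm, fun h => h2 (Or.symm h)⟩⟩
  loopless := ⟨fun d h => h.1 rfl⟩

/-- `G(I)` has exactly two connected components, `I₁` and `I₂`: they partition `I`,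
are nonempty, and two diagonals of `I` are joined by a path in the non-crossing graph
iff they lie in the same part. -/
def TwoComponents (I I₁ I₂ : Finset (ℕ × ℕ)) : Prop :=
  I₁ ∪ I₂ = I ∧ Disjoint I₁ I₂ ∧ I₁.Nonempty ∧ I₂.Nonempty ∧
    ∀ (d : ℕ × ℕ) (hd : d ∈ I) (e : ℕ × ℕ) (he : e ∈ I),
      (ncGraph I).Reachable ⟨d, hd⟩ ⟨e, he⟩ ↔
        (d ∈ I₁ ∧ e ∈ I₁) ∨ (d ∈ I₂ ∧ e ∈ I₂)

/-- `q(n) = n(n+2)/4` for even `n` and `q(n) = (n+1)²/4` for odd `n`. -/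
def q (n : ℕ) : ℕ := if Even n then n * (n + 2) / 4 else (n + 1) ^ 2 / 4

/-!
A disconnected `G(I)` splits `I` into nonempty parts `A`, `B` such that every diagonal of `A`
crosses every diagonal of `B`; in particular `A` and `B` have no common vertex. Fixing `b ∈ B`,
each diagonal of `A` joins an endpoint of `A` inside the arc cut off by `b` to one outside it, so
`|A| ≤ x²/4` where `x` is the number of endpoints of `A`; likewise `|B| ≤ y²/4` with `x + y ≤ N`
(here `N = n + 3`). If both parts have at least two diagonals this gives
`|A| + |B| ≤ (N - 2)²/4 = q(n) < |I|`. Hence one part is a single diagonal `d`, and the other is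
contained in the set of the `(j - i - 1)(N - j + i - 1) ≤ q(n)` diagonals crossing `d = (i, j)`,
so it is that whole set and `d` has the maximal crossing number, i.e. `2(j - i) ∈ [N - 1, N + 1]`.
Conversely such a set has the components `{d}` and the diagonals crossing `d` (any two of them are
joined through a third sharing an endpoint with each), and `d` is recovered as its isolated
vertex, so the count is the number of these maximal diagonals.
-/

section

open Finset

theorem Crosses.symm {d e : ℕ × ℕ} (h : Crosses d e) : Crosses e d := Or.symm h

theorem crosses_irrefl (d : ℕ × ℕ) : ¬ Crosses d d := by
  unfold Crosses; omega

theorem not_crosses_of_common_endpoint {d e : ℕ × ℕ}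
    (h : d.1 = e.1 ∨ d.1 = e.2 ∨ d.2 = e.1 ∨ d.2 = e.2) : ¬ Crosses d e := by
  unfold Crosses; omega

theorem mem_Diags {N : ℕ} {d : ℕ × ℕ} : d ∈ Diags N ↔ IsDiag N d := by
  simp only [Diags, mem_filter, mem_product, mem_range, and_iff_right_iff_imp]
  rintro ⟨-, h₁, h₂, -⟩
  omega

theorem mul_le_sq_div_four (a b : ℕ) : a * b ≤ (a + b) ^ 2 / 4 := by
  rw [Nat.le_div_iff_mul_le (by norm_num)]
  zify
  nlinarith [sq_nonneg ((a : ℤ) - b)]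

theorem mul_eq_sq_div_four_iff {a b : ℕ} : a * b = (a + b) ^ 2 / 4 ↔ a ≤ b + 1 ∧ b ≤ a + 1 := by
  constructor
  · intro h
    by_contra hab
    have : a * b + 1 ≤ (a + b) ^ 2 / 4 := by
      rw [Nat.le_div_iff_mul_le (by norm_num)]
      zify
      rcases not_and_or.mp hab with hab | hab <;>
        nlinarith [sq_nonneg ((a : ℤ) - b)]
    omega
  · rintro ⟨hab, hba⟩
    obtain rfl | rfl | rfl : a = b ∨ a = b + 1 ∨ b = a + 1 := by omega
    · rw [show (a + a) ^ 2 = 4 * (a * a) by ring]; omega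
    · rw [show (b + 1 + b) ^ 2 = 4 * ((b + 1) * b) + 1 by ring]; omega
    · rw [show (a + (a + 1)) ^ 2 = 4 * (a * (a + 1)) + 1 by ring]; omega

theorem sq_div_four_add_sq_div_four_le {x y : ℕ} (hx : 3 ≤ x) (hy : 3 ≤ y) :
    x ^ 2 / 4 + y ^ 2 / 4 ≤ (x + y - 2) ^ 2 / 4 := by
  obtain ⟨a, rfl⟩ : ∃ a, x = a + 3 := ⟨x - 3, by omega⟩
  obtain ⟨b, rfl⟩ : ∃ b, y = b + 3 := ⟨y - 3, by omega⟩
  rw [show a + 3 + (b + 3) - 2 = a + b + 4 by omega]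
  by_cases hab : a + b = 0
  · obtain ⟨rfl, rfl⟩ : a = 0 ∧ b = 0 := by omega
    norm_num
  calc (a + 3) ^ 2 / 4 + (b + 3) ^ 2 / 4 ≤ ((a + 3) ^ 2 + (b + 3) ^ 2) / 4 :=
        Nat.div_add_div_le_add_div
    -- `(a + b + 4)² - (a + 3)² - (b + 3)² = 2 (a b + a + b - 1)`
    _ ≤ (a + b + 4) ^ 2 / 4 := Nat.div_le_div_right (by ring_nf; omega)

theorem q_eq (n : ℕ) : q n = (n + 1) ^ 2 / 4 := by
  unfold q
  split_ifs with h
  · obtain ⟨k, rfl⟩ := h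
    rw [show (k + k) * (k + k + 2) = 4 * (k * (k + 1)) by ring,
      show (k + k + 1) ^ 2 = 4 * (k * (k + 1)) + 1 by ring]
    omega
  · rfl

def crossSet (N : ℕ) (d : ℕ × ℕ) : Finset (ℕ × ℕ) := {e ∈ Diags N | Crosses d e}

theorem mem_crossSet {N : ℕ} {d e : ℕ × ℕ} : e ∈ crossSet N d ↔ e ∈ Diags N ∧ Crosses d e :=
  mem_filter

theorem self_notMem_crossSet (N : ℕ) (d : ℕ × ℕ) : d ∉ crossSet N d :=
  fun h => crosses_irrefl d (mem_crossSet.mp h).2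

theorem crossSet_eq_image {N : ℕ} {d : ℕ × ℕ} (hd : d ∈ Diags N) :
    crossSet N d = (Ioo d.1 d.2 ×ˢ (Ico 1 d.1 ∪ Ioc d.2 N)).image
      fun p => (min p.1 p.2, max p.1 p.2) := by
  obtain ⟨hd₁, hd₂, hd₃, -⟩ := mem_Diags.mp hd
  ext ⟨i, j⟩
  simp only [mem_crossSet, mem_Diags, IsDiag, Crosses, mem_image, mem_product, mem_Ioo,
    mem_union, mem_Ico, mem_Ioc, Prod.exists, Prod.mk.injEq]
  constructor
  · rintro ⟨⟨hi, hij, hj, -⟩, ⟨h₁, h₂, h₃⟩ | ⟨h₁, h₂, h₃⟩⟩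
    · exact ⟨i, j, ⟨⟨h₁, h₂⟩, by omega⟩, by omega, by omega⟩
    · exact ⟨j, i, ⟨⟨h₂, h₃⟩, by omega⟩, by omega, by omega⟩
  · rintro ⟨x, y, ⟨⟨hx₁, hx₂⟩, hy⟩, rfl, rfl⟩
    omega

theorem card_crossSet {N : ℕ} {d : ℕ × ℕ} (hd : d ∈ Diags N) :
    #(crossSet N d) = (d.2 - d.1 - 1) * (d.1 - 1 + (N - d.2)) := by
  obtain ⟨hd₁, hd₂, hd₃, -⟩ := mem_Diags.mp hd
  rw [crossSet_eq_image hd, card_image_of_injOn, card_product,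
    card_union_of_disjoint (disjoint_left.mpr fun y h₁ h₂ => by simp at h₁ h₂; omega),
    Nat.card_Ioo, Nat.card_Ico, Nat.card_Ioc]
  rintro ⟨x, y⟩ hxy ⟨x', y'⟩ hxy' h
  simp only [coe_product, coe_union, Set.mem_prod, mem_coe, mem_Ioo, Set.mem_union, mem_Ico,
    mem_Ioc, Prod.mk.injEq] at hxy hxy' h ⊢
  omega

theorem card_crossSet_le {N : ℕ} {d : ℕ × ℕ} (hd : d ∈ Diags N) :
    #(crossSet N d) ≤ (N - 2) ^ 2 / 4 := by
  obtain ⟨hd₁, hd₂, hd₃, -⟩ := mem_Diags.mp hd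
  rw [card_crossSet hd, show N - 2 = d.2 - d.1 - 1 + (d.1 - 1 + (N - d.2)) by omega]
  exact mul_le_sq_div_four _ _

def maxDiags (N : ℕ) : Finset (ℕ × ℕ) := {d ∈ Diags N | #(crossSet N d) = (N - 2) ^ 2 / 4}

theorem maxDiags_eq_filter_length (N : ℕ) :
    maxDiags N = {d ∈ Diags N | N ≤ 2 * (d.2 - d.1) + 1 ∧ 2 * (d.2 - d.1) ≤ N + 1} := by
  refine filter_congr fun d hd => ?_
  obtain ⟨hd₁, hd₂, hd₃, -⟩ := mem_Diags.mp hd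
  rw [card_crossSet hd, show N - 2 = d.2 - d.1 - 1 + (d.1 - 1 + (N - d.2)) by omega,
    mul_eq_sq_div_four_iff]
  omega

theorem card_filter_length_eq {N c : ℕ} (hc : 2 ≤ c) (hcN : c + 2 ≤ N) :
    #{d ∈ Diags N | d.2 - d.1 = c} = N - c := by
  have : {d ∈ Diags N | d.2 - d.1 = c} = (Icc 1 (N - c)).image fun i => (i, i + c) := by
    ext ⟨i, j⟩
    simp only [mem_filter, mem_Diags, IsDiag, mem_image, mem_Icc, Prod.mk.injEq]
    constructor
    · rintro ⟨⟨hi, -, hj, -⟩, hij⟩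
      exact ⟨i, ⟨hi, by omega⟩, rfl, by omega⟩
    · rintro ⟨i, hi, rfl, rfl⟩
      omega
  rw [this, card_image_of_injective _ fun i i' h => (Prod.mk.inj h).1, Nat.card_Icc]
  omega

theorem card_maxDiags {N : ℕ} (hN : 4 ≤ N) : #(maxDiags N) = if Even N then N / 2 else N := by
  rw [maxDiags_eq_filter_length]
  obtain ⟨m, rfl | rfl⟩ := Nat.even_or_odd' N
  · rw [if_pos (even_two_mul m),
      filter_congr fun d _ => show _ ↔ d.2 - d.1 = m by omega, card_filter_length_eq (by omega)
      (by omega)]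
    omega
  · rw [if_neg (Nat.not_even_two_mul_add_one m),
      filter_congr fun d _ => show _ ↔ d.2 - d.1 = m ∨ d.2 - d.1 = m + 1 by omega, filter_or,
      card_union_of_disjoint (disjoint_filter.mpr fun d _ h => by omega),
      card_filter_length_eq (by omega) (by omega), card_filter_length_eq (by omega) (by omega)]
    omega

def endpoints (A : Finset (ℕ × ℕ)) : Finset ℕ := A.biUnion fun a => {a.1, a.2}

theorem mem_endpoints {A : Finset (ℕ × ℕ)} {v : ℕ} :
    v ∈ endpoints A ↔ ∃ a ∈ A, v = a.1 ∨ v = a.2 := by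
  simp [endpoints]

theorem endpoints_subset_Icc {N : ℕ} {A : Finset (ℕ × ℕ)} (hA : A ⊆ Diags N) :
    endpoints A ⊆ Icc 1 N := by
  intro v hv
  obtain ⟨a, ha, hv⟩ := mem_endpoints.mp hv
  obtain ⟨h₁, h₂, h₃, -⟩ := mem_Diags.mp (hA ha)
  rw [mem_Icc]
  omega

theorem disjoint_endpoints_of_forall_crosses {A B : Finset (ℕ × ℕ)}
    (h : ∀ a ∈ A, ∀ b ∈ B, Crosses a b) : Disjoint (endpoints A) (endpoints B) := by
  refine disjoint_left.mpr fun v hvA hvB => ?_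
  obtain ⟨a, ha, hva⟩ := mem_endpoints.mp hvA
  obtain ⟨b, hb, hvb⟩ := mem_endpoints.mp hvB
  exact not_crosses_of_common_endpoint (by omega) (h a ha b hb)

/-- Every diagonal of `A` joins an endpoint of `A` inside the arc cut off by `b` to one outside. -/
theorem card_le_sq_card_endpoints_div_four {A : Finset (ℕ × ℕ)} {b : ℕ × ℕ}
    (h : ∀ a ∈ A, Crosses a b) : #A ≤ #(endpoints A) ^ 2 / 4 := by
  have hsub : A ⊆ ((endpoints A ∩ Ioo b.1 b.2) ×ˢ (endpoints A \ Ioo b.1 b.2)).image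
      fun p => (min p.1 p.2, max p.1 p.2) := by
    intro a ha
    have hend : a.1 ∈ endpoints A ∧ a.2 ∈ endpoints A :=
      ⟨mem_endpoints.mpr ⟨a, ha, .inl rfl⟩, mem_endpoints.mpr ⟨a, ha, .inr rfl⟩⟩
    simp only [mem_image, mem_product, mem_inter, mem_sdiff, mem_Ioo, Prod.exists]
    rcases h a ha with ⟨h₁, h₂, h₃⟩ | ⟨h₁, h₂, h₃⟩
    · exact ⟨a.2, a.1, ⟨⟨hend.2, h₂, h₃⟩, hend.1, by omega⟩, by ext <;> simp <;> omega⟩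
    · exact ⟨a.1, a.2, ⟨⟨hend.1, h₁, h₂⟩, hend.2, by omega⟩, by ext <;> simp <;> omega⟩
  calc #A ≤ #(endpoints A ∩ Ioo b.1 b.2) * #(endpoints A \ Ioo b.1 b.2) :=
        (card_le_card hsub).trans (card_image_le.trans (card_product _ _).le)
    _ ≤ #(endpoints A) ^ 2 / 4 := by
        rw [← card_inter_add_card_sdiff (endpoints A) (Ioo b.1 b.2)]
        exact mul_le_sq_div_four _ _

theorem card_add_card_le_of_forall_crosses {N : ℕ} {A B : Finset (ℕ × ℕ)}
    (hA : A ⊆ Diags N) (hB : B ⊆ Diags N) (h : ∀ a ∈ A, ∀ b ∈ B, Crosses a b)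
    (hA₂ : 2 ≤ #A) (hB₂ : 2 ≤ #B) : #A + #B ≤ (N - 2) ^ 2 / 4 := by
  obtain ⟨a₀, ha₀⟩ := card_pos.mp (by omega : 0 < #A)
  obtain ⟨b₀, hb₀⟩ := card_pos.mp (by omega : 0 < #B)
  have hA' := card_le_sq_card_endpoints_div_four fun a ha => h a ha b₀ hb₀
  have hB' := card_le_sq_card_endpoints_div_four fun b hb => (h a₀ ha₀ b hb).symm
  have three_le {x : ℕ} (hx : 2 ≤ x ^ 2 / 4) : 3 ≤ x := by
    by_contra! hx'
    interval_cases x <;> simp at hx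
  have hN : #(endpoints A) + #(endpoints B) ≤ N := by
    rw [← card_union_of_disjoint (disjoint_endpoints_of_forall_crosses h)]
    simpa using card_le_card (union_subset (endpoints_subset_Icc hA) (endpoints_subset_Icc hB))
  calc #A + #B ≤ #(endpoints A) ^ 2 / 4 + #(endpoints B) ^ 2 / 4 := add_le_add hA' hB'
    _ ≤ (#(endpoints A) + #(endpoints B) - 2) ^ 2 / 4 :=
        sq_div_four_add_sq_div_four_le (three_le (hA₂.trans hA')) (three_le (hB₂.trans hB'))
    _ ≤ (N - 2) ^ 2 / 4 := Nat.div_le_div_right (Nat.pow_le_pow_left (by omega) 2)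

theorem reachable_of_common_endpoint {I : Finset (ℕ × ℕ)} {d e : ℕ × ℕ} (hd : d ∈ I) (he : e ∈ I)
    (h : d.1 = e.1 ∨ d.1 = e.2 ∨ d.2 = e.1 ∨ d.2 = e.2) :
    (ncGraph I).Reachable ⟨d, hd⟩ ⟨e, he⟩ := by
  by_cases hde : d = e
  · subst hde
    rfl
  · exact SimpleGraph.Adj.reachable ⟨fun h => hde (congrArg Subtype.val h),
      not_crosses_of_common_endpoint h⟩

theorem eq_of_reachable_of_forall_crosses {I : Finset (ℕ × ℕ)} {d e : ℕ × ℕ} (hd : d ∈ I)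
    (he : e ∈ I) (h : ∀ f ∈ I, f ≠ d → Crosses d f)
    (hr : (ncGraph I).Reachable ⟨d, hd⟩ ⟨e, he⟩) : e = d := by
  obtain ⟨w⟩ := hr
  cases w with
  | nil => rfl
  | @cons _ f _ hadj _ =>
    exact absurd (h f.1 f.2 fun hf => hadj.1 (Subtype.ext hf.symm)) hadj.2

/-- Two diagonals crossing `d` are joined through the diagonal from the inner endpoint of the
first to the outer endpoint of the second, which also crosses `d`. -/
theorem reachable_of_mem_crossSet {N : ℕ} {d : ℕ × ℕ} (hd : d ∈ Diags N) {I : Finset (ℕ × ℕ)}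
    (hI : crossSet N d ⊆ I) {e f : ℕ × ℕ} (he : e ∈ crossSet N d) (hf : f ∈ crossSet N d) :
    (ncGraph I).Reachable ⟨e, hI he⟩ ⟨f, hI hf⟩ := by
  rw [crossSet_eq_image hd, mem_image] at he hf
  obtain ⟨⟨x, y⟩, hxy, rfl⟩ := he
  obtain ⟨⟨x', y'⟩, hxy', rfl⟩ := hf
  simp only [mem_product] at hxy hxy'
  have hg : (min x y', max x y') ∈ crossSet N d := by
    rw [crossSet_eq_image hd]
    exact mem_image_of_mem _ (show (x, y') ∈ _ ×ˢ _ from mem_product.mpr ⟨hxy.1, hxy'.2⟩)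
  exact (reachable_of_common_endpoint _ (hI hg) (by omega)).trans
    (reachable_of_common_endpoint _ _ (by omega))

theorem exists_crossing_partition_of_not_preconnected {I : Finset (ℕ × ℕ)}
    (h : ¬ (ncGraph I).Preconnected) :
    ∃ A B : Finset (ℕ × ℕ), A ∪ B = I ∧ Disjoint A B ∧ A.Nonempty ∧ B.Nonempty ∧
      ∀ a ∈ A, ∀ b ∈ B, Crosses a b := by
  classical
  obtain ⟨u, v, huv⟩ : ∃ u v, ¬ (ncGraph I).Reachable u v := by
    simpa [SimpleGraph.Preconnected] using h
  set A := {z ∈ I | ∃ hz : z ∈ I, (ncGraph I).Reachable u ⟨z, hz⟩}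
  have hAI : A ⊆ I := filter_subset _ _
  refine ⟨A, I \ A, union_sdiff_of_subset hAI, disjoint_sdiff,
    ⟨u, mem_filter.mpr ⟨u.2, u.2, .refl _⟩⟩,
    ⟨v, mem_sdiff.mpr ⟨v.2, fun hv => huv (mem_filter.mp hv).2.2⟩⟩, fun a ha b hb => ?_⟩
  obtain ⟨-, haI, hua⟩ := mem_filter.mp ha
  obtain ⟨hbI, hbA⟩ := mem_sdiff.mp hb
  by_contra hab
  have hadj : (ncGraph I).Adj ⟨a, haI⟩ ⟨b, hbI⟩ :=
    ⟨fun h => hbA (Subtype.mk.inj h ▸ ha), hab⟩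
  exact hbA (mem_filter.mpr ⟨hbI, hbI, hua.trans hadj.reachable⟩)

theorem exists_mem_maxDiags_eq_insert_crossSet {N : ℕ} {I : Finset (ℕ × ℕ)} (hI : I ⊆ Diags N)
    (hcard : #I = (N - 2) ^ 2 / 4 + 1) (h : ¬ (ncGraph I).Preconnected) :
    ∃ d ∈ maxDiags N, I = insert d (crossSet N d) := by
  obtain ⟨A, B, hAB, hdisj, hA, hB, hcr⟩ := exists_crossing_partition_of_not_preconnected h
  have hsum : #A + #B = (N - 2) ^ 2 / 4 + 1 := by rw [← card_union_of_disjoint hdisj, hAB, hcard]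
  have hsmall : #A ≤ 1 ∨ #B ≤ 1 := by
    by_contra! hbig
    have := card_add_card_le_of_forall_crosses (subset_union_left.trans (hAB ▸ hI))
      (subset_union_right.trans (hAB ▸ hI)) hcr hbig.1 hbig.2
    omega
  wlog hA₁ : #A ≤ 1 generalizing A B
  · exact this B A (union_comm A B ▸ hAB) hdisj.symm hB hA (fun b hb a ha => (hcr a ha b hb).symm)
      (by omega) hsmall.symm (hsmall.resolve_left hA₁)
  obtain ⟨d, rfl⟩ := card_eq_one.mp (le_antisymm hA₁ (card_pos.mpr hA))
  rw [card_singleton] at hsum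
  have hd : d ∈ Diags N := hI (hAB ▸ mem_union_left _ (mem_singleton_self d))
  have hBsub : B ⊆ crossSet N d := fun b hb =>
    mem_crossSet.mpr ⟨hI (hAB ▸ mem_union_right _ hb), hcr d (mem_singleton_self d) b hb⟩
  have hBeq : B = crossSet N d :=
    eq_of_subset_of_card_le hBsub (by linarith [card_crossSet_le hd])
  exact ⟨d, mem_filter.mpr ⟨hd, by rw [← hBeq]; omega⟩, by rw [← hAB, hBeq, insert_eq]⟩

theorem TwoComponents.not_preconnected {I I₁ I₂ : Finset (ℕ × ℕ)} (h : TwoComponents I I₁ I₂) :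
    ¬ (ncGraph I).Preconnected := by
  obtain ⟨hU, hD, ⟨d, hd⟩, ⟨e, he⟩, hreach⟩ := h
  intro hconn
  rcases (hreach d (hU ▸ mem_union_left _ hd) e (hU ▸ mem_union_right _ he)).mp (hconn _ _) with
    ⟨-, he₁⟩ | ⟨hd₂, -⟩
  · exact disjoint_left.mp hD he₁ he
  · exact disjoint_left.mp hD hd hd₂

theorem crosses_of_mem_insert_crossSet (N : ℕ) (d : ℕ × ℕ) :
    ∀ f ∈ insert d (crossSet N d), f ≠ d → Crosses d f :=
  fun _ hf hfd => (mem_crossSet.mp ((mem_insert.mp hf).resolve_left hfd)).2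

theorem twoComponents_insert_crossSet {N : ℕ} {d : ℕ × ℕ} (hd : d ∈ Diags N)
    (hne : (crossSet N d).Nonempty) :
    TwoComponents (insert d (crossSet N d)) {d} (crossSet N d) := by
  refine ⟨(insert_eq d _).symm, disjoint_singleton_left.mpr (self_notMem_crossSet N d),
    singleton_nonempty d, hne, fun x hx y hy => ⟨fun hr => ?_, ?_⟩⟩
  · by_cases hxd : x = d
    · subst hxd
      exact .inl ⟨mem_singleton_self x, mem_singleton.mpr
        (eq_of_reachable_of_forall_crosses hx hy (crosses_of_mem_insert_crossSet N x) hr)⟩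
    by_cases hyd : y = d
    · subst hyd
      exact absurd (eq_of_reachable_of_forall_crosses hy hx
        (crosses_of_mem_insert_crossSet N y) hr.symm) hxd
    exact .inr ⟨(mem_insert.mp hx).resolve_left hxd, (mem_insert.mp hy).resolve_left hyd⟩
  · rintro (⟨hx, hy⟩ | ⟨hx, hy⟩)
    · obtain rfl := mem_singleton.mp hx
      obtain rfl := mem_singleton.mp hy
      rfl
    · exact reachable_of_mem_crossSet hd (subset_insert d _) hx hy

/-- The diagonal `d` is recovered from `insert d (crossSet N d)` as its only isolated vertex. -/
theorem eq_of_insert_crossSet_eq {N : ℕ} {d d' : ℕ × ℕ} (hd : d ∈ Diags N)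
    (h₂ : 2 ≤ #(crossSet N d)) (h : insert d (crossSet N d) = insert d' (crossSet N d')) :
    d = d' := by
  by_contra hne
  have hd' : d' ∈ crossSet N d :=
    (mem_insert.mp (h ▸ mem_insert_self d' _)).resolve_left (Ne.symm hne)
  obtain ⟨e, he, hed'⟩ := exists_mem_ne h₂ d'
  have hsub : crossSet N d ⊆ insert d' (crossSet N d') := h ▸ subset_insert d _
  exact hed' (eq_of_reachable_of_forall_crosses _ _ (crosses_of_mem_insert_crossSet N d')
    (reachable_of_mem_crossSet hd hsub hd' he))

theorem le_card_crossSet_of_mem_maxDiags {N k : ℕ} {d : ℕ × ℕ} (hN : k + 2 ≤ N)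
    (hd : d ∈ maxDiags N) : k ^ 2 / 4 ≤ #(crossSet N d) :=
  (mem_filter.mp hd).2 ▸ Nat.div_le_div_right (Nat.pow_le_pow_left (by omega) 2)

theorem injOn_insert_crossSet {N : ℕ} (hN : 5 ≤ N) :
    Set.InjOn (fun d => insert d (crossSet N d)) (maxDiags N) := fun _ hd _ _ h =>
  eq_of_insert_crossSet_eq (mem_filter.mp hd).1 (le_card_crossSet_of_mem_maxDiags (k := 3) hN hd) h

open scoped Classical in
theorem filter_not_preconnected_eq_image {N : ℕ} (hN : 4 ≤ N) :
    ((Diags N).powersetCard ((N - 2) ^ 2 / 4 + 1)).filter (fun I => ¬ (ncGraph I).Preconnected)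
      = (maxDiags N).image fun d => insert d (crossSet N d) := by
  ext I
  simp only [mem_filter, mem_powersetCard, mem_image]
  constructor
  · rintro ⟨⟨hI, hcard⟩, hconn⟩
    obtain ⟨d, hd, rfl⟩ := exists_mem_maxDiags_eq_insert_crossSet hI hcard hconn
    exact ⟨d, hd, rfl⟩
  · rintro ⟨d, hd, rfl⟩
    obtain ⟨hdD, hcard⟩ := mem_filter.mp hd
    have hne : (crossSet N d).Nonempty :=
      card_pos.mp (le_card_crossSet_of_mem_maxDiags (k := 2) hN hd)
    exact ⟨⟨insert_subset hdD (filter_subset _ _),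
      by rw [card_insert_of_notMem (self_notMem_crossSet N d), hcard]⟩,
      (twoComponents_insert_crossSet hdD hne).not_preconnected⟩

end

open scoped Classical in
/-- Theorem 2.15 (combinatorial content): the number of sets `I` of diagonals of the
`(n+3)`-gon with `|I| = q(n)+1` whose non-crossing graph is disconnected equals `n+3`
for even `n` and `(n+3)/2` for odd `n`; moreover each such graph has exactly two
connected components. (By Hochster's formula this count is `β^{-q,2(q+1)}(Asⁿ)`.) -/
theorem count_disconnected_extremal_sets (n : ℕ) (hn : 3 ≤ n) :
    (((Diags (n + 3)).powersetCard (q n + 1)).filter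
        (fun I => ¬ (ncGraph I).Preconnected)).card
      = (if Even n then n + 3 else (n + 3) / 2) ∧
    ∀ I ∈ ((Diags (n + 3)).powersetCard (q n + 1)).filter
        (fun I => ¬ (ncGraph I).Preconnected),
      ∃ I₁ I₂ : Finset (ℕ × ℕ), TwoComponents I I₁ I₂ := by
  rw [show q n = (n + 3 - 2) ^ 2 / 4 from q_eq n, filter_not_preconnected_eq_image (by omega)]
  refine ⟨?_, fun I hI => ?_⟩
  · rw [Finset.card_image_of_injOn (injOn_insert_crossSet (by omega)), card_maxDiags (by omega)]
    rcases Nat.even_or_odd n with h | h <;> simp [h, parity_simps]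
  · obtain ⟨d, hd, rfl⟩ := Finset.mem_image.mp hI
    exact ⟨_, _, twoComponents_insert_crossSet (Finset.mem_filter.mp hd).1
      (Finset.card_pos.mp (le_card_crossSet_of_mem_maxDiags (k := 2) (by omega) hd))⟩
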